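/- Let d ≥ 2 be an integer and α ∈ (0,d). For every nonnegative locally integrable function ω on ℝ^d, every R > 0 and every s ∈ (0,1), one has ∫_{ℝ^d} ψ_R(x) ω(x) dx ≥ s^{1+α/2} ∫_{{|x| ≤ R√(1−s)}} ω(x) dx. Consequently, with H_d = ((α+2)/(d+2))^{1+α/2}((d−α)/(d+2))^{(d−α)/2}, one has sup_{R>0} R^{α−d} ∫_{ℝ^d} ψ_R(x)ω(x) dx ≥ H_d · sup_{ρ>0} ρ^{α−d} ∫_{{|x| ≤ ρ}} ω(x) dx. -/

import Mathlib

/-!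
On the ball `|x| ≤ R√(1-s)` one has `1 - |x/R|² ≥ s`, so `ψ_R ≥ s^{1+α/2}` there; since `ψ_R ≥ 0`
and `ω ≥ 0` this gives the first inequality. For the second, given `ρ` take `R = ρ/√(1-s)`: then
`R^{α-d} = (1-s)^{(d-α)/2} ρ^{α-d}`, and `s = (α+2)/(d+2)` maximises `s^{1+α/2} (1-s)^{(d-α)/2}`,
whose maximum is `H_d`.
-/

open MeasureTheory Real

/-- The bump function `ψ(x) = (1-|x|²)₊^{1+α/2}`. -/
noncomputable def bumpPsi (d : ℕ) (α : ℝ) (x : EuclideanSpace ℝ (Fin d)) : ℝ :=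
  (max (1 - ‖x‖ ^ 2) 0) ^ (1 + α / 2)

lemma const_mul_setIntegral_le_integral_mul {X : Type*} [TopologicalSpace X] [T2Space X]
    [MeasurableSpace X] [OpensMeasurableSpace X] {μ : Measure X} {f g : X → ℝ} {K : Set X}
    {c : ℝ} (hK : IsCompact K) (hf : LocallyIntegrable f μ) (hf₀ : ∀ x, 0 ≤ f x)
    (hg : Continuous g) (hg_supp : HasCompactSupport g) (hg₀ : ∀ x, 0 ≤ g x)
    (hcg : ∀ x ∈ K, c ≤ g x) :
    c * ∫ x in K, f x ∂μ ≤ ∫ x, g x * f x ∂μ := by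
  have hgf : Integrable (fun x ↦ g x * f x) μ :=
    hf.integrable_smul_left_of_hasCompactSupport hg hg_supp
  calc c * ∫ x in K, f x ∂μ = ∫ x in K, c * f x ∂μ := (integral_const_mul c _).symm
    _ ≤ ∫ x in K, g x * f x ∂μ :=
        setIntegral_mono_on ((hf.integrableOn_isCompact hK).const_mul c) hgf.integrableOn
          hK.measurableSet fun x hx ↦ mul_le_mul_of_nonneg_right (hcg x hx) (hf₀ x)
    _ ≤ ∫ x, g x * f x ∂μ :=
        setIntegral_le_integral hgf (Filter.Eventually.of_forall fun x ↦ mul_nonneg (hg₀ x) (hf₀ x))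

lemma ENNReal.ofReal_mul_iSup_le_iSup {F G : ℝ → ℝ} {c : ℝ} (hc : 0 ≤ c)
    (h : ∀ ρ, 0 < ρ → ∃ R, 0 < R ∧ c * F ρ ≤ G R) :
    ENNReal.ofReal c * ⨆ (ρ : ℝ) (_ : 0 < ρ), ENNReal.ofReal (F ρ) ≤
      ⨆ (R : ℝ) (_ : 0 < R), ENNReal.ofReal (G R) := by
  simp only [ENNReal.mul_iSup]
  refine iSup₂_le fun ρ hρ ↦ ?_
  obtain ⟨R, hR, hFG⟩ := h ρ hρ
  rw [← ENNReal.ofReal_mul hc]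
  exact le_iSup₂_of_le R hR (ENNReal.ofReal_le_ofReal hFG)

lemma div_sqrt_rpow_sub {ρ t : ℝ} (hρ : 0 ≤ ρ) (ht : 0 ≤ t) (a b : ℝ) :
    (ρ / √t) ^ (a - b) = ρ ^ (a - b) * t ^ ((b - a) / 2) := by
  rw [div_rpow hρ (sqrt_nonneg t), sqrt_eq_rpow, ← rpow_mul ht, div_eq_mul_inv,
    ← rpow_neg ht]
  ring_nf

section bumpPsi

variable {d : ℕ} {α : ℝ}

lemma bumpPsi_nonneg (x : EuclideanSpace ℝ (Fin d)) : 0 ≤ bumpPsi d α x :=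
  rpow_nonneg (le_max_right _ _) _

lemma continuous_bumpPsi (hα : 0 < 1 + α / 2) : Continuous (bumpPsi d α) :=
  ((continuous_const.sub (continuous_norm.pow 2)).max continuous_const).rpow_const
    fun _ ↦ Or.inr hα.le

lemma bumpPsi_eq_zero_of_one_le_norm (hα : 0 < 1 + α / 2) {x : EuclideanSpace ℝ (Fin d)}
    (hx : 1 ≤ ‖x‖) : bumpPsi d α x = 0 := by
  have : max (1 - ‖x‖ ^ 2) 0 = 0 := max_eq_right (by nlinarith)
  rw [bumpPsi, this, zero_rpow hα.ne']

lemma hasCompactSupport_bumpPsi (hα : 0 < 1 + α / 2) : HasCompactSupport (bumpPsi d α) :=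
  HasCompactSupport.intro (isCompact_closedBall 0 1) fun x hx ↦
    bumpPsi_eq_zero_of_one_le_norm hα (lt_of_not_ge (by simpa using hx)).le

lemma rpow_le_bumpPsi (hα : 0 ≤ 1 + α / 2) {s : ℝ} (hs : 0 ≤ s) {x : EuclideanSpace ℝ (Fin d)}
    (hx : ‖x‖ ^ 2 ≤ 1 - s) : s ^ (1 + α / 2) ≤ bumpPsi d α x :=
  rpow_le_rpow hs (le_max_of_le_left (by linarith)) hα

lemma rpow_le_bumpPsi_inv_smul (hα : 0 ≤ 1 + α / 2) {R s : ℝ} (hR : 0 < R)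
    (hs : s ∈ Set.Icc (0 : ℝ) 1) {x : EuclideanSpace ℝ (Fin d)}
    (hx : x ∈ Metric.closedBall 0 (R * √(1 - s))) : s ^ (1 + α / 2) ≤ bumpPsi d α (R⁻¹ • x) := by
  have hnorm : ‖R⁻¹ • x‖ ≤ √(1 - s) := by
    rw [norm_smul, norm_inv, norm_of_nonneg hR.le, inv_mul_le_iff₀ hR]
    simpa using hx
  refine rpow_le_bumpPsi hα hs.1 ?_
  calc ‖R⁻¹ • x‖ ^ 2 ≤ √(1 - s) ^ 2 := pow_le_pow_left₀ (norm_nonneg _) hnorm 2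
    _ = 1 - s := sq_sqrt (by linarith [hs.2])

variable {ω : EuclideanSpace ℝ (Fin d) → ℝ}

lemma rpow_mul_setIntegral_closedBall_le_integral_bumpPsi (hα : 0 < 1 + α / 2)
    (hω : ∀ x, 0 ≤ ω x) (hloc : LocallyIntegrable ω volume) {R s : ℝ} (hR : 0 < R)
    (hs : s ∈ Set.Icc (0 : ℝ) 1) :
    s ^ (1 + α / 2) * (∫ x in Metric.closedBall 0 (R * √(1 - s)), ω x) ≤
      ∫ x, bumpPsi d α (R⁻¹ • x) * ω x :=
  const_mul_setIntegral_le_integral_mul (isCompact_closedBall _ _) hloc hω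
    ((continuous_bumpPsi hα).comp (continuous_const_smul _))
    ((hasCompactSupport_bumpPsi hα).comp_smul (inv_ne_zero hR.ne')) (fun _ ↦ bumpPsi_nonneg _)
    fun _ hx ↦ rpow_le_bumpPsi_inv_smul hα.le hR hs hx

lemma rpow_mul_concentration_le_moment (hα : 0 < 1 + α / 2) (hω : ∀ x, 0 ≤ ω x)
    (hloc : LocallyIntegrable ω volume) {ρ s : ℝ} (hρ : 0 < ρ) (hs : s ∈ Set.Ico (0 : ℝ) 1) :
    s ^ (1 + α / 2) * (1 - s) ^ (((d : ℝ) - α) / 2) *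
        (ρ ^ (α - d) * ∫ x in Metric.closedBall 0 ρ, ω x) ≤
      (ρ / √(1 - s)) ^ (α - d) * ∫ x, bumpPsi d α ((ρ / √(1 - s))⁻¹ • x) * ω x := by
  have h1s : 0 < 1 - s := sub_pos.2 hs.2
  have hsqrt : 0 < √(1 - s) := sqrt_pos.2 h1s
  have hR : 0 < ρ / √(1 - s) := div_pos hρ hsqrt
  have hball := rpow_mul_setIntegral_closedBall_le_integral_bumpPsi hα hω hloc hR
    (Set.Ico_subset_Icc_self hs)
  rw [div_mul_cancel₀ ρ hsqrt.ne'] at hball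
  rw [div_sqrt_rpow_sub hρ.le h1s.le]
  calc s ^ (1 + α / 2) * (1 - s) ^ (((d : ℝ) - α) / 2) *
        (ρ ^ (α - d) * ∫ x in Metric.closedBall 0 ρ, ω x)
      = ρ ^ (α - d) * (1 - s) ^ (((d : ℝ) - α) / 2) *
          (s ^ (1 + α / 2) * ∫ x in Metric.closedBall 0 ρ, ω x) := by ring
    _ ≤ _ :=
        mul_le_mul_of_nonneg_left hball (mul_nonneg (rpow_nonneg hρ.le _) (rpow_nonneg h1s.le _))

end bumpPsi

theorem moments_vs_concentration_general (d : ℕ) (α : ℝ) (hα : α ∈ Set.Ioo (0:ℝ) (d:ℝ))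
    (ω : EuclideanSpace ℝ (Fin d) → ℝ) (hω : ∀ x, 0 ≤ ω x)
    (hloc : LocallyIntegrable ω volume) :
    (∀ R : ℝ, 0 < R → ∀ s ∈ Set.Ioo (0:ℝ) 1,
      s ^ (1 + α / 2) *
          (∫ x in Metric.closedBall (0 : EuclideanSpace ℝ (Fin d)) (R * Real.sqrt (1 - s)), ω x) ≤
        ∫ x : EuclideanSpace ℝ (Fin d), bumpPsi d α (R⁻¹ • x) * ω x) ∧
    ENNReal.ofReal
        (((α + 2) / ((d : ℝ) + 2)) ^ (1 + α / 2) * (((d : ℝ) - α) / (d + 2)) ^ (((d : ℝ) - α) / 2)) *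
        (⨆ (ρ : ℝ) (_ : 0 < ρ),
          ENNReal.ofReal (ρ ^ (α - d) *
            ∫ x in Metric.closedBall (0 : EuclideanSpace ℝ (Fin d)) ρ, ω x)) ≤
      ⨆ (R : ℝ) (_ : 0 < R),
        ENNReal.ofReal (R ^ (α - d) * ∫ x : EuclideanSpace ℝ (Fin d), bumpPsi d α (R⁻¹ • x) * ω x) := by
  obtain ⟨hα₀, hαd⟩ := hα
  have hexp : 0 < 1 + α / 2 := by linarith
  refine ⟨fun R hR s hs ↦ rpow_mul_setIntegral_closedBall_le_integral_bumpPsi hexp hω hloc hR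
    (Set.Ioo_subset_Icc_self hs), ?_⟩
  set s : ℝ := (α + 2) / ((d : ℝ) + 2)
  have hd₂ : (0 : ℝ) < d + 2 := by positivity
  have hs : s ∈ Set.Ico (0 : ℝ) 1 := ⟨by positivity, (div_lt_one hd₂).2 (by linarith)⟩
  have h1s : ((d : ℝ) - α) / (d + 2) = 1 - s := by simp only [s]; field_simp; ring
  rw [h1s]
  refine ENNReal.ofReal_mul_iSup_le_iSup
    (mul_nonneg (rpow_nonneg hs.1 _) (rpow_nonneg (sub_nonneg.2 hs.2.le) _)) fun ρ hρ ↦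
      ⟨ρ / √(1 - s), div_pos hρ (sqrt_pos.2 (sub_pos.2 hs.2)),
        rpow_mul_concentration_le_moment hexp hω hloc hρ hs⟩

/-- Comparison of truncated moments `∫ ψ_R ω` with the radial concentration. -/
theorem moments_vs_concentration (d : ℕ) (hd : 2 ≤ d) (α : ℝ) (hα : α ∈ Set.Ioo (0:ℝ) (d:ℝ))
    (ω : EuclideanSpace ℝ (Fin d) → ℝ) (hω : ∀ x, 0 ≤ ω x)
    (hloc : LocallyIntegrable ω volume) :
    (∀ R : ℝ, 0 < R → ∀ s ∈ Set.Ioo (0:ℝ) 1,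
      s ^ (1 + α / 2) *
          (∫ x in Metric.closedBall (0 : EuclideanSpace ℝ (Fin d)) (R * Real.sqrt (1 - s)), ω x) ≤
        ∫ x : EuclideanSpace ℝ (Fin d), bumpPsi d α (R⁻¹ • x) * ω x) ∧
    ENNReal.ofReal
        (((α + 2) / ((d : ℝ) + 2)) ^ (1 + α / 2) * (((d : ℝ) - α) / (d + 2)) ^ (((d : ℝ) - α) / 2)) *
        (⨆ (ρ : ℝ) (_ : 0 < ρ),
          ENNReal.ofReal (ρ ^ (α - d) *
            ∫ x in Metric.closedBall (0 : EuclideanSpace ℝ (Fin d)) ρ, ω x)) ≤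
      ⨆ (R : ℝ) (_ : 0 < R),
        ENNReal.ofReal (R ^ (α - d) * ∫ x : EuclideanSpace ℝ (Fin d), bumpPsi d α (R⁻¹ • x) * ω x) :=
  moments_vs_concentration_general d α hα ω hω hloc
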